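/- arXiv:1503.07201 — 2 statements merged into one kernel-verified Lean document; each statement's English description precedes it below -/
import Mathlib

section
/- Let K ⊂ ℝ² be compact with d = diam(K) > 0. Let a : ℝ² → ℝ be measurable and bounded with a(y) = 0 for y ∉ K. Let α ∈ (0,1] and let f : ℝ² → ℝ satisfy: f has finite positive Hölder seminorm |f|_{C^α}, f ≥ 0 everywhere, f is not identically zero, and f(y) = 0 for y ∉ K. Then for every x ∈ K, M[a,f](x) ≥ (π / (2^{1+2/α} d)) · e^{−d‖a‖_∞} · (‖f‖_∞ / |f|_{C^α})^{2/α} · ‖f‖_∞. In particular M[a,f] is bounded below on K by a positive constant, so 1/M[a,f] is bounded on K. -/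
open MeasureTheory Real Set
open scoped ENNReal

/-- The unit direction vector in `ℝ²` with angle `φ`; integrating over `φ ∈ (0, 2π]`
realizes integration over the unit circle `S¹` with its arclength measure. -/
noncomputable def dir (φ : ℝ) : EuclideanSpace ℝ (Fin 2) :=
  (WithLp.equiv 2 (Fin 2 → ℝ)).symm ![Real.cos φ, Real.sin φ]

/-- The averaging operator
`M[a,f](x) = ∫_{S¹} ∫₀^∞ f(x+tθ) exp(−∫₀^t a(x+sθ) ds) dt dθ`,
here as a lower Lebesgue integral (the integrand is nonnegative when `f ≥ 0`). -/
noncomputable def Mop (a f : EuclideanSpace ℝ (Fin 2) → ℝ)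
    (x : EuclideanSpace ℝ (Fin 2)) : ℝ≥0∞ :=
  ∫⁻ φ in Set.Ioc 0 (2 * π), ∫⁻ t in Set.Ioi (0 : ℝ),
    ENNReal.ofReal (f (x + t • dir φ) * Real.exp (-∫ s in (0:ℝ)..t, a (x + s • dir φ)))

/-!
Let `z` be a maximum point of `f`, so `f z = ‖f‖_∞`. Hölder continuity keeps `f ≥ ‖f‖_∞ / 2` on
the ball `B` of radius `r = (‖f‖_∞ / (2 |f|_{C^α}))^{1/α}` about `z`; in particular `B ⊆ K`.
A ray from `x ∈ K` meets `B` only within distance `d` of `x`, where the attenuation factor is at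
least `e^{-d ‖a‖_∞}`. Writing the area of `B` in polar coordinates about `x`,
`π r² = ∫_{S¹} ∫₀^∞ t 1_B(x + tθ) dt dθ ≤ d ∫_{S¹} ∫₀^∞ 1_B(x + tθ) dt dθ`,
hence `M[a,f](x) ≥ (‖f‖_∞ / 2) e^{-d ‖a‖_∞} π r² / d`.
-/

local notation "ℝ²" => EuclideanSpace ℝ (Fin 2)

open Metric Bornology

theorem HolderWith.of_dist_le {X Y : Type*} [PseudoMetricSpace X] [PseudoMetricSpace Y]
    {C r : NNReal} {f : X → Y} (h : ∀ x y, dist (f x) (f y) ≤ C * dist x y ^ (r : ℝ)) :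
    HolderWith C r f := fun x y => by
  rw [edist_dist, edist_dist, ENNReal.ofReal_rpow_of_nonneg dist_nonneg r.coe_nonneg,
    ← ENNReal.ofReal_coe_nnreal, ← ENNReal.ofReal_mul C.coe_nonneg]
  exact ENNReal.ofReal_le_ofReal (h x y)

theorem holderWith_of_isLUB {X : Type*} [MetricSpace X] {f : X → ℝ} {α H : ℝ} (hα : 0 < α)
    (hH0 : 0 ≤ H) (hH : IsLUB {r : ℝ | ∃ x y : X, x ≠ y ∧ r = |f x - f y| / dist x y ^ α} H) :
    HolderWith ⟨H, hH0⟩ ⟨α, hα.le⟩ f := .of_dist_le fun x y => by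
  change dist (f x) (f y) ≤ H * dist x y ^ α
  rcases eq_or_ne x y with rfl | hxy
  · simp [zero_rpow hα.ne']
  have hpos : 0 < dist x y ^ α := rpow_pos_of_pos (dist_pos.2 hxy) α
  rw [Real.dist_eq, ← div_le_iff₀ hpos]
  exact hH.1 ⟨x, y, hxy, rfl⟩

theorem HolderWith.sub_le_of_mem_ball {X : Type*} [PseudoMetricSpace X] {C r : NNReal}
    {f : X → ℝ} (hf : HolderWith C r f) (hC : 0 < C) (hr : 0 < r) {ε : ℝ} (hε : 0 ≤ ε)
    {z y : X} (hy : y ∈ ball z ((ε / C) ^ (r : ℝ)⁻¹)) : f z - ε ≤ f y := by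
  have := hf.dist_le_of_le (mem_ball.1 hy).le
  rw [rpow_inv_rpow (by positivity) (by positivity), mul_div_cancel₀ _ (by positivity)] at this
  linarith [neg_abs_le (f y - f z), Real.dist_eq (f y) (f z)]

theorem Continuous.exists_eq_of_isLUB_range {X : Type*} [TopologicalSpace X] [Nonempty X]
    {f : X → ℝ} (hf : Continuous f) (hfc : HasCompactSupport f) {F : ℝ}
    (hF : IsLUB (range f) F) : ∃ z, f z = F := by
  obtain ⟨z, hz⟩ := hf.exists_forall_ge_of_hasCompactSupport hfc
  exact ⟨z, (IsGreatest.isLUB (s := range f) ⟨⟨z, rfl⟩, by rintro _ ⟨y, rfl⟩; exact hz y⟩).unique hF⟩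

theorem Function.Periodic.setLIntegral_Ioc_add_eq {g : ℝ → ℝ≥0∞} {T : ℝ} (hT : 0 < T)
    (hg : Function.Periodic g T) (s t : ℝ) :
    ∫⁻ x in Ioc s (s + T), g x = ∫⁻ x in Ioc t (t + T), g x := by
  have := Fact.mk hT
  simp only [← hg.lift_coe, AddCircle.lintegral_preimage]

theorem dir_add_two_pi (φ : ℝ) : dir (φ + 2 * π) = dir φ := by
  simp only [dir, cos_add_two_pi, sin_add_two_pi]

theorem norm_dir (φ : ℝ) : ‖dir φ‖ = 1 := by
  simp [dir, EuclideanSpace.norm_eq]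

theorem dist_self_add_smul_dir (x : ℝ²) (t φ : ℝ) : dist x (x + t • dir φ) = |t| := by
  rw [dist_self_add_right, norm_smul, norm_dir, mul_one, Real.norm_eq_abs]

theorem measurePreserving_finTwoArrow_symm_trans_toLp :
    MeasurePreserving (MeasurableEquiv.finTwoArrow.symm.trans (MeasurableEquiv.toLp 2 (Fin 2 → ℝ)))
      (volume : Measure (ℝ × ℝ)) (volume : Measure ℝ²) :=
  (EuclideanSpace.volume_preserving_symm_measurableEquiv_toLp (Fin 2)).symm.comp
    (volume_preserving_finTwoArrow ℝ).symm

theorem finTwoArrow_symm_trans_toLp_polarCoord_symm (p : ℝ × ℝ) :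
    MeasurableEquiv.finTwoArrow.symm.trans (MeasurableEquiv.toLp 2 (Fin 2 → ℝ))
      (polarCoord.symm p) = p.1 • dir p.2 := by
  ext i
  fin_cases i <;> simp [dir, polarCoord, MeasurableEquiv.finTwoArrow]

theorem lintegral_eq_lintegral_polar_dir {g : ℝ² → ℝ≥0∞} (hg : Measurable g) :
    ∫⁻ y, g y = ∫⁻ φ in Ioc 0 (2 * π), ∫⁻ t in Ioi (0:ℝ), ENNReal.ofReal t * g (t • dir φ) := by
  set e := MeasurableEquiv.finTwoArrow.symm.trans (MeasurableEquiv.toLp 2 (Fin 2 → ℝ))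
  have hmeas : Measurable fun p : ℝ × ℝ => ENNReal.ofReal p.1 * g (e (polarCoord.symm p)) :=
    (ENNReal.measurable_ofReal.comp measurable_fst).mul
      (hg.comp (e.measurable.comp continuous_polarCoord_symm.measurable))
  have hper : Function.Periodic
      (fun φ => ∫⁻ t in Ioi (0:ℝ), ENNReal.ofReal t * g (t • dir φ)) (2 * π) := fun φ => by
    simp only [dir_add_two_pi]
  calc ∫⁻ y, g y = ∫⁻ q, g (e q) :=
        (measurePreserving_finTwoArrow_symm_trans_toLp.lintegral_comp_emb
          e.measurableEmbedding g).symm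
    _ = ∫⁻ p in polarCoord.target, ENNReal.ofReal p.1 * g (e (polarCoord.symm p)) :=
        (lintegral_comp_polarCoord_symm _).symm
    _ = ∫⁻ φ in Ioo (-π) π, ∫⁻ t in Ioi (0:ℝ), ENNReal.ofReal t * g (t • dir φ) := by
        rw [polarCoord_target, Measure.volume_eq_prod, ← Measure.prod_restrict,
          lintegral_prod_symm _ hmeas.aemeasurable]
        simp only [finTwoArrow_symm_trans_toLp_polarCoord_symm, e]
    _ = ∫⁻ φ in Ioc (-π) π, ∫⁻ t in Ioi (0:ℝ), ENNReal.ofReal t * g (t • dir φ) :=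
        setLIntegral_congr Ioo_ae_eq_Ioc
    _ = ∫⁻ φ in Ioc 0 (2 * π), ∫⁻ t in Ioi (0:ℝ), ENNReal.ofReal t * g (t • dir φ) := by
        have := hper.setLIntegral_Ioc_add_eq two_pi_pos (-π) 0
        rwa [zero_add, show -π + 2 * π = π by ring] at this

noncomputable def rayIntegral (S : Set ℝ²) (x : ℝ²) : ℝ≥0∞ :=
  ∫⁻ φ in Ioc 0 (2 * π), ∫⁻ t in Ioi (0:ℝ), S.indicator 1 (x + t • dir φ)

section Rays

variable {K S : Set ℝ²} {x : ℝ²}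

theorem abs_le_diam_of_add_smul_dir_mem (hK : IsBounded K) (hx : x ∈ K) {t φ : ℝ}
    (hy : x + t • dir φ ∈ K) : |t| ≤ diam K :=
  dist_self_add_smul_dir x t φ ▸ dist_le_diam_of_mem hK hx hy

theorem volume_le_diam_mul_rayIntegral (hK : IsBounded K) (hS : MeasurableSet S)
    (hSK : S ⊆ K) (hx : x ∈ K) :
    volume S ≤ ENNReal.ofReal (diam K) * rayIntegral S x := by
  have hray : ∀ φ t, ENNReal.ofReal t * S.indicator 1 (x + t • dir φ) ≤
      ENNReal.ofReal (diam K) * S.indicator 1 (x + t • dir φ) := fun φ t => by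
    by_cases hy : x + t • dir φ ∈ S
    · gcongr
      exact (le_abs_self t).trans (abs_le_diam_of_add_smul_dir_mem hK hx (hSK hy))
    · simp [hy]
  calc volume S = ∫⁻ y, S.indicator 1 (x + y) := by
        rw [lintegral_add_left_eq_self, lintegral_indicator_one hS]
    _ = ∫⁻ φ in Ioc 0 (2 * π), ∫⁻ t in Ioi (0:ℝ),
          ENNReal.ofReal t * S.indicator 1 (x + t • dir φ) :=
        lintegral_eq_lintegral_polar_dir ((measurable_one.indicator hS).comp (measurable_const_add x))
    _ ≤ ∫⁻ φ in Ioc 0 (2 * π), ∫⁻ t in Ioi (0:ℝ),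
          ENNReal.ofReal (diam K) * S.indicator 1 (x + t • dir φ) :=
        lintegral_mono fun φ => lintegral_mono fun t => hray φ t
    _ = _ := by simp_rw [rayIntegral, lintegral_const_mul' _ _ ENNReal.ofReal_ne_top]

theorem ofReal_mul_rayIntegral_le_Mop (hK : IsBounded K) (hSK : S ⊆ K) (hx : x ∈ K)
    {a f : ℝ² → ℝ} {A c : ℝ} (ha : ∀ y, |a y| ≤ A) (hc : 0 ≤ c) (hf : ∀ y ∈ S, c ≤ f y) :
    ENNReal.ofReal (c * exp (-(diam K * A))) * rayIntegral S x ≤ Mop a f x := by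
  have hray : ∀ φ t, ENNReal.ofReal (c * exp (-(diam K * A))) * S.indicator 1 (x + t • dir φ) ≤
      ENNReal.ofReal (f (x + t • dir φ) * exp (-∫ s in (0:ℝ)..t, a (x + s • dir φ))) :=
      fun φ t => by
    by_cases hy : x + t • dir φ ∈ S
    · have ht := abs_le_diam_of_add_smul_dir_mem hK hx (hSK hy)
      have hA : 0 ≤ A := (abs_nonneg _).trans (ha x)
      have hint : ∫ s in (0:ℝ)..t, a (x + s • dir φ) ≤ diam K * A :=
        calc _ ≤ ‖∫ s in (0:ℝ)..t, a (x + s • dir φ)‖ := le_norm_self _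
          _ ≤ A * |t - 0| := intervalIntegral.norm_integral_le_of_norm_le_const fun s _ => ha _
          _ ≤ diam K * A := by rw [sub_zero, mul_comm]; gcongr
      simp only [hy, indicator_of_mem, Pi.one_apply, mul_one]
      exact ENNReal.ofReal_le_ofReal (mul_le_mul (hf _ hy) (exp_le_exp.2 (neg_le_neg hint))
        (exp_pos _).le (hc.trans (hf _ hy)))
    · simp [hy]
  rw [Mop, rayIntegral, ← lintegral_const_mul' _ _ ENNReal.ofReal_ne_top]
  refine lintegral_mono fun φ => ?_
  rw [← lintegral_const_mul' _ _ ENNReal.ofReal_ne_top]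
  exact lintegral_mono fun t => hray φ t

theorem ofReal_mul_volume_le_diam_mul_Mop (hK : IsBounded K) (hS : MeasurableSet S)
    (hSK : S ⊆ K) (hx : x ∈ K) {a f : ℝ² → ℝ} {A c : ℝ} (ha : ∀ y, |a y| ≤ A) (hc : 0 ≤ c)
    (hf : ∀ y ∈ S, c ≤ f y) :
    ENNReal.ofReal (c * exp (-(diam K * A))) * volume S ≤
      ENNReal.ofReal (diam K) * Mop a f x :=
  calc _ ≤ ENNReal.ofReal (c * exp (-(diam K * A))) *
        (ENNReal.ofReal (diam K) * rayIntegral S x) := by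
        gcongr; exact volume_le_diam_mul_rayIntegral hK hS hSK hx
    _ = ENNReal.ofReal (diam K) * (ENNReal.ofReal (c * exp (-(diam K * A))) * rayIntegral S x) :=
        mul_left_comm ..
    _ ≤ _ := by gcongr; exact ofReal_mul_rayIntegral_le_Mop hK hSK hx ha hc hf

end Rays

theorem stmt2_general (K : Set (EuclideanSpace ℝ (Fin 2))) (hK : IsCompact K)
    (d : ℝ) (hd : Metric.diam K = d) (hdpos : 0 < d)
    (a : EuclideanSpace ℝ (Fin 2) → ℝ)
    -- `A = ‖a‖_∞`, in particular `a` is bounded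
    (A : ℝ) (hA : IsLUB (Set.range fun y => |a y|) A)
    (α : ℝ) (hα0 : 0 < α)
    (f : EuclideanSpace ℝ (Fin 2) → ℝ)
    -- `Hα = |f|_{C^α}` is the Hölder seminorm of `f`, finite and positive
    (Hα : ℝ) (hHα : IsLUB {r : ℝ | ∃ x y : EuclideanSpace ℝ (Fin 2),
      x ≠ y ∧ r = |f x - f y| / dist x y ^ α} Hα)
    (hHαpos : 0 < Hα)
    (hf0 : ∀ y, 0 ≤ f y) (hfne : f ≠ 0) (hfsupp : ∀ y ∉ K, f y = 0)
    -- `F = ‖f‖_∞`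
    (F : ℝ) (hF : IsLUB (Set.range f) F) :
    ∀ x ∈ K,
      ENNReal.ofReal (π / ((2:ℝ) ^ (1 + 2 / α) * d) * Real.exp (-(d * A)) *
        (F / Hα) ^ (2 / α) * F) ≤ Mop a f x := by
  intro x hx
  have hHol := holderWith_of_isLUB hα0 hHαpos.le hHα
  obtain ⟨z, hzF⟩ := (hHol.continuous hα0).exists_eq_of_isLUB_range
    (HasCompactSupport.intro hK hfsupp) hF
  have hFpos : 0 < F := by
    obtain ⟨y, hy⟩ := Function.ne_iff.1 hfne
    exact ((hf0 y).lt_of_ne' hy).trans_le (hF.1 ⟨y, rfl⟩)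
  set r := (F / 2 / Hα) ^ α⁻¹
  have hball : ∀ y ∈ ball z r, F / 2 ≤ f y := fun y hy => by
    linarith [hHol.sub_le_of_mem_ball hHαpos hα0 (by positivity : 0 ≤ F / 2) hy]
  have hballK : ball z r ⊆ K := fun y hy => by
    by_contra hyK
    linarith [hball y hy, hfsupp y hyK]
  have hM := ofReal_mul_volume_le_diam_mul_Mop hK.isBounded measurableSet_ball hballK hx
    (fun y => hA.1 ⟨y, rfl⟩) (by positivity) hball
  rw [hd, EuclideanSpace.volume_ball_fin_two] at hM
  have hr2 : r ^ 2 = (F / Hα) ^ (2 / α) / 2 ^ (2 / α) := by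
    rw [← rpow_natCast, ← rpow_mul (by positivity), div_right_comm,
      div_rpow (by positivity) zero_le_two, Nat.cast_ofNat, inv_mul_eq_div]
  refine (ENNReal.mul_le_mul_iff_right (by simpa using hdpos) ENNReal.ofReal_ne_top).1
    (le_of_eq_of_le ?_ hM)
  rw [← ENNReal.ofReal_mul hdpos.le, ← ENNReal.ofReal_pow (by positivity),
    ← ENNReal.ofReal_mul (by positivity), ← ENNReal.ofReal_mul (by positivity), hr2,
    rpow_add two_pos, rpow_one]
  congr 1
  field_simp

/-- Lower bound for `M[a,f]` on `K`:
`M[a,f](x) ≥ (π / (2^{1+2/α} d)) e^{−d‖a‖_∞} (‖f‖_∞/|f|_{C^α})^{2/α} ‖f‖_∞` for `x ∈ K`. -/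
theorem stmt2 (K : Set (EuclideanSpace ℝ (Fin 2))) (hK : IsCompact K)
    (d : ℝ) (hd : Metric.diam K = d) (hdpos : 0 < d)
    (a : EuclideanSpace ℝ (Fin 2) → ℝ) (hameas : Measurable a)
    -- `A = ‖a‖_∞`, in particular `a` is bounded
    (A : ℝ) (hA : IsLUB (Set.range fun y => |a y|) A)
    (hasupp : ∀ y ∉ K, a y = 0)
    (α : ℝ) (hα0 : 0 < α) (hα1 : α ≤ 1)
    (f : EuclideanSpace ℝ (Fin 2) → ℝ)
    -- `Hα = |f|_{C^α}` is the Hölder seminorm of `f`, finite and positive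
    (Hα : ℝ) (hHα : IsLUB {r : ℝ | ∃ x y : EuclideanSpace ℝ (Fin 2),
      x ≠ y ∧ r = |f x - f y| / dist x y ^ α} Hα)
    (hHαpos : 0 < Hα)
    (hf0 : ∀ y, 0 ≤ f y) (hfne : f ≠ 0) (hfsupp : ∀ y ∉ K, f y = 0)
    -- `F = ‖f‖_∞`
    (F : ℝ) (hF : IsLUB (Set.range f) F) :
    ∀ x ∈ K,
      ENNReal.ofReal (π / ((2:ℝ) ^ (1 + 2 / α) * d) * Real.exp (-(d * A)) *
        (F / Hα) ^ (2 / α) * F) ≤ Mop a f x :=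
  stmt2_general K hK d hd hdpos a A hA α hα0 f Hα hHα hHαpos hf0 hfne hfsupp F hF
end

section
/- Let ε > 0 and let h : ℝ² → ℝ be continuous with h ≥ 0, h(x) = 0 for |x| > ε, and m = ∫_{ℝ²} h > 0. Let K' ⊆ ℝ² be a bounded measurable set with Lebesgue measure λ(K') > 0, and let 𝒫 be a countable measurable partition of K' such that every P ∈ 𝒫 contains a closed ball of radius 2ε. Let g = Σ_{P ∈ 𝒫} c_P 1_P with real coefficients c_P and g ∈ L²(ℝ²) (g is defined to be 0 outside K'). Then ‖h * g‖_{L²(ℝ²)} ≥ m ε (π / λ(K'))^{1/2} ‖g‖_{L²(ℝ²)}. -/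
/-!
On the disc of radius `ε` around the centre `z` of a `2ε`-disc inside a piece `P`, the
convolution `h * g` is the constant `c_P m`: `h` lives on the `ε`-disc and `g ≡ c_P` on the
`2ε`-disc. These disjoint discs of area `πε²` give `‖h * g‖² ≥ m²πε² ∑ c_P²`, whereas
`‖g‖² = ∑ c_P² λ(P) ≤ λ(K') ∑ c_P²`.
-/

open MeasureTheory Real Set
open scoped ENNReal

section PiecewiseConstant

variable {α ι : Type*} {P : ι → Set α} (c : ι → ℝ) {x : α}

lemma tsum_mul_indicator_one_of_mem (hP : Pairwise (Function.onFun Disjoint P)) {i : ι}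
    (hx : x ∈ P i) : ∑' j, c j * (P j).indicator (fun _ => (1 : ℝ)) x = c i := by
  rw [tsum_eq_single i fun j hj => by
    simp [indicator_of_notMem (disjoint_left.mp (hP hj).symm hx)]]
  simp [indicator_of_mem hx]

lemma tsum_mul_indicator_one_of_notMem_iUnion (hx : x ∉ ⋃ i, P i) :
    ∑' j, c j * (P j).indicator (fun _ => (1 : ℝ)) x = 0 := by
  simp_all

end PiecewiseConstant

section LIntegral

variable {α ι : Type*} [MeasurableSpace α] [Countable ι] {μ : Measure α} {B : ι → Set α}
  {f : α → ℝ≥0∞} {a : ι → ℝ≥0∞}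

lemma setLIntegral_iUnion_eq_tsum_of_eqOn (hB : ∀ i, MeasurableSet (B i))
    (hBd : Pairwise (Function.onFun Disjoint B)) (hf : ∀ i, EqOn f (fun _ => a i) (B i)) :
    ∫⁻ x in ⋃ i, B i, f x ∂μ = ∑' i, a i * μ (B i) := by
  rw [lintegral_iUnion hB hBd]
  exact tsum_congr fun i => by rw [setLIntegral_congr_fun (hB i) (hf i), setLIntegral_const]

lemma lintegral_eq_tsum_of_eqOn (hB : ∀ i, MeasurableSet (B i))
    (hBd : Pairwise (Function.onFun Disjoint B)) (hf : ∀ i, EqOn f (fun _ => a i) (B i))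
    (hf0 : ∀ x ∉ ⋃ i, B i, f x = 0) :
    ∫⁻ x, f x ∂μ = ∑' i, a i * μ (B i) := by
  rw [← setLIntegral_eq_of_support_subset (s := ⋃ i, B i)
    (Function.support_subset_iff'.2 hf0), setLIntegral_iUnion_eq_tsum_of_eqOn hB hBd hf]

lemma eLpNorm_two_sq {E : Type*} [NormedAddCommGroup E] (g : α → E) :
    eLpNorm g 2 μ ^ 2 = ∫⁻ x, ‖g x‖ₑ ^ 2 ∂μ := by
  simpa using eLpNorm_nnreal_pow_eq_lintegral (f := g) (μ := μ) (p := 2) two_ne_zero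

lemma mul_eLpNorm_two_le_of_eqOn_pieces {E F : Type*} [NormedAddCommGroup E]
    [NormedAddCommGroup F] {P : ι → Set α} (hP : ∀ i, MeasurableSet (P i))
    (hPd : Pairwise (Function.onFun Disjoint P)) (hB : ∀ i, MeasurableSet (B i))
    (hBP : ∀ i, B i ⊆ P i) {g : α → E} {u : α → F} {c : ι → E} {b : ι → F}
    (hg : ∀ i, EqOn g (fun _ => c i) (P i)) (hg0 : ∀ x ∉ ⋃ i, P i, g x = 0)
    (hu : ∀ i, EqOn u (fun _ => b i) (B i)) {k : ℝ≥0∞}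
    (hk : ∀ i, k ^ 2 * (‖c i‖ₑ ^ 2 * μ (P i)) ≤ ‖b i‖ₑ ^ 2 * μ (B i)) :
    k * eLpNorm g 2 μ ≤ eLpNorm u 2 μ := by
  rw [← ENNReal.pow_le_pow_left_iff two_ne_zero, mul_pow, eLpNorm_two_sq, eLpNorm_two_sq,
    lintegral_eq_tsum_of_eqOn (a := fun i => ‖c i‖ₑ ^ 2) hP hPd
      (fun i x hx => by simp [hg i hx]) (fun x hx => by simp [hg0 x hx]),
    ← ENNReal.tsum_mul_left]
  calc ∑' i, k ^ 2 * (‖c i‖ₑ ^ 2 * μ (P i))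
      ≤ ∑' i, ‖b i‖ₑ ^ 2 * μ (B i) := ENNReal.tsum_le_tsum hk
    _ = ∫⁻ x in ⋃ i, B i, ‖u x‖ₑ ^ 2 ∂μ :=
        (setLIntegral_iUnion_eq_tsum_of_eqOn hB (fun i j hij => (hPd hij).mono (hBP i) (hBP j))
          (fun i x hx => by simp [hu i hx])).symm
    _ ≤ _ := setLIntegral_le_lintegral _ _

end LIntegral

lemma integral_sub_mul_eq_mul_integral_of_eqOn_closedBall {G : Type*} [NormedAddCommGroup G]
    [MeasurableSpace G] [MeasurableAdd G] [MeasurableNeg G] (μ : Measure G) [μ.IsNegInvariant]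
    [μ.IsAddLeftInvariant] {h g : G → ℝ} {ε c : ℝ} {x : G}
    (hsupp : ∀ y, ε < ‖y‖ → h y = 0) (hg : EqOn g (fun _ => c) (Metric.closedBall x ε)) :
    ∫ y, h (x - y) * g y ∂μ = c * ∫ y, h y ∂μ := by
  have hpt : ∀ y, h (x - y) * g y = c * h (x - y) := fun y => by
    by_cases hy : dist y x ≤ ε
    · rw [hg hy, mul_comm]
    · rw [hsupp _ (by rw [← dist_eq_norm, dist_comm]; exact not_le.mp hy), zero_mul, mul_zero]
  simp_rw [hpt]
  rw [integral_const_mul, integral_sub_left_eq_self h μ x]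

-- For `V = 0` and `V = ∞` the junk value `b / V.toReal = 0` makes the left side vanish.
lemma ofReal_sqrt_div_toReal_sq_mul_le {b : ℝ} (hb : 0 ≤ b) (V : ℝ≥0∞) :
    ENNReal.ofReal √(b / V.toReal) ^ 2 * V ≤ ENNReal.ofReal b := by
  rcases eq_or_ne V ∞ with rfl | hV
  · simp
  obtain ⟨t, ht, rfl⟩ : ∃ t, 0 ≤ t ∧ V = ENNReal.ofReal t :=
    ⟨V.toReal, ENNReal.toReal_nonneg, (ENNReal.ofReal_toReal hV).symm⟩
  rw [ENNReal.toReal_ofReal ht, ← ENNReal.ofReal_pow (sqrt_nonneg _),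
    sq_sqrt (div_nonneg hb ht), ← ENNReal.ofReal_mul (div_nonneg hb ht)]
  gcongr
  rcases eq_or_ne t 0 with rfl | ht0
  · simpa using hb
  · rw [div_mul_cancel₀ _ ht0]

lemma ofReal_mul_sqrt_div_toReal_sq_mul_le (a : ℝ) {b : ℝ} (hb : 0 ≤ b) (V : ℝ≥0∞) :
    ENNReal.ofReal (a * √(b / V.toReal)) ^ 2 * V ≤ ‖a‖ₑ ^ 2 * ENNReal.ofReal b :=
  calc ENNReal.ofReal (a * √(b / V.toReal)) ^ 2 * V
      ≤ ‖a * √(b / V.toReal)‖ₑ ^ 2 * V := by gcongr; exact Real.ofReal_le_enorm _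
    _ = ‖a‖ₑ ^ 2 * (ENNReal.ofReal √(b / V.toReal) ^ 2 * V) := by
        rw [enorm_mul, Real.enorm_of_nonneg (sqrt_nonneg _)]; ring
    _ ≤ ‖a‖ₑ ^ 2 * ENNReal.ofReal b := by gcongr; exact ofReal_sqrt_div_toReal_sq_mul_le hb V

lemma ofReal_sqrt_div_volume_sq_mul_le_volume_ball {S K : Set (EuclideanSpace ℝ (Fin 2))}
    (hSK : S ⊆ K) (m c : ℝ) {ε : ℝ} (hε : 0 ≤ ε) (z : EuclideanSpace ℝ (Fin 2)) :
    ENNReal.ofReal (m * ε * √(π / (volume K).toReal)) ^ 2 * (‖c‖ₑ ^ 2 * volume S) ≤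
      ‖c * m‖ₑ ^ 2 * volume (Metric.ball z ε) :=
  calc ENNReal.ofReal (m * ε * √(π / (volume K).toReal)) ^ 2 * (‖c‖ₑ ^ 2 * volume S)
      ≤ ‖c‖ₑ ^ 2 * (ENNReal.ofReal (m * ε * √(π / (volume K).toReal)) ^ 2 * volume K) := by
        rw [mul_left_comm]; gcongr
    _ ≤ ‖c‖ₑ ^ 2 * (‖m * ε‖ₑ ^ 2 * ENNReal.ofReal π) :=
        mul_le_mul_right (ofReal_mul_sqrt_div_toReal_sq_mul_le _ pi_nonneg _) _
    _ = ‖c * m‖ₑ ^ 2 * volume (Metric.ball z ε) := by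
        rw [EuclideanSpace.volume_ball_fin_two, enorm_mul, enorm_mul, Real.enorm_of_nonneg hε]
        ring

theorem stmt12_general (ε : ℝ) (hε : 0 < ε)
    (h : EuclideanSpace ℝ (Fin 2) → ℝ)
    (hsupp : ∀ x : EuclideanSpace ℝ (Fin 2), ε < ‖x‖ → h x = 0)
    (K' : Set (EuclideanSpace ℝ (Fin 2)))
    (ι : Type) [Countable ι] (P : ι → Set (EuclideanSpace ℝ (Fin 2)))
    (hPmeas : ∀ i, MeasurableSet (P i))
    (hPdisj : Pairwise (Function.onFun Disjoint P))
    (hPunion : (⋃ i, P i) = K')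
    (hPball : ∀ i, ∃ z, Metric.closedBall z (2 * ε) ⊆ P i)
    (c : ι → ℝ)
    (g : EuclideanSpace ℝ (Fin 2) → ℝ)
    (hg : g = fun x => ∑' i, c i * (P i).indicator (fun _ => (1 : ℝ)) x) :
    ENNReal.ofReal ((∫ x, h x) * ε * Real.sqrt (π / (volume K').toReal)) *
        eLpNorm g 2 volume ≤
      eLpNorm (fun x => ∫ y, h (x - y) * g y) 2 volume := by
  subst hPunion
  choose z hz using hPball
  have hgP (i : ι) : EqOn g (fun _ => c i) (P i) := fun x hx => by
    rw [hg]; exact tsum_mul_indicator_one_of_mem c hPdisj hx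
  have hg0 : ∀ x ∉ ⋃ i, P i, g x = 0 := fun x hx => by
    rw [hg]; exact tsum_mul_indicator_one_of_notMem_iUnion c hx
  -- the `ε`-ball around a point of `ball (z i) ε` lies in `closedBall (z i) (2ε) ⊆ P i`
  have hconv (i : ι) : EqOn (fun x => ∫ y, h (x - y) * g y) (fun _ => c i * ∫ x, h x)
      (Metric.ball (z i) ε) := fun x hx =>
    integral_sub_mul_eq_mul_integral_of_eqOn_closedBall volume hsupp <| (hgP i).mono <|
      (Metric.closedBall_subset_closedBall' (by linarith [Metric.mem_ball.mp hx])).trans (hz i)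
  exact mul_eLpNorm_two_le_of_eqOn_pieces hPmeas hPdisj (fun _ => measurableSet_ball)
    (fun i => Metric.ball_subset_closedBall.trans <|
      (Metric.closedBall_subset_closedBall (by linarith)).trans (hz i)) hgP hg0 hconv
    fun i => ofReal_sqrt_div_volume_sq_mul_le_volume_ball (subset_iUnion P i) _ _ hε.le _

/-- Lower bound for the convolution of a nonnegative bump `h` (supported in the ball of
radius `ε`, with mass `m = ∫ h > 0`) against a piecewise-constant function `g` built from
a countable measurable partition of `K'` whose pieces each contain a closed ball of
radius `2ε`: `‖h * g‖_{L²} ≥ m ε (π / λ(K'))^{1/2} ‖g‖_{L²}`. -/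
theorem stmt12 (ε : ℝ) (hε : 0 < ε)
    (h : EuclideanSpace ℝ (Fin 2) → ℝ) (hcont : Continuous h)
    (h0 : ∀ x, 0 ≤ h x) (hsupp : ∀ x : EuclideanSpace ℝ (Fin 2), ε < ‖x‖ → h x = 0)
    (hm : 0 < ∫ x, h x)
    (K' : Set (EuclideanSpace ℝ (Fin 2))) (hK'bdd : Bornology.IsBounded K')
    (hK'meas : MeasurableSet K') (hK'pos : 0 < volume K')
    (ι : Type) [Countable ι] (P : ι → Set (EuclideanSpace ℝ (Fin 2)))
    (hPmeas : ∀ i, MeasurableSet (P i))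
    (hPdisj : Pairwise (Function.onFun Disjoint P))
    (hPunion : (⋃ i, P i) = K')
    (hPball : ∀ i, ∃ z, Metric.closedBall z (2 * ε) ⊆ P i)
    (c : ι → ℝ)
    (g : EuclideanSpace ℝ (Fin 2) → ℝ)
    (hg : g = fun x => ∑' i, c i * (P i).indicator (fun _ => (1 : ℝ)) x)
    (hgL2 : MemLp g 2 volume) :
    ENNReal.ofReal ((∫ x, h x) * ε * Real.sqrt (π / (volume K').toReal)) *
        eLpNorm g 2 volume ≤
      eLpNorm (fun x => ∫ y, h (x - y) * g y) 2 volume :=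
  stmt12_general ε hε h hsupp K' ι P hPmeas hPdisj hPunion hPball c g hg
end
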